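/- arXiv:1911.08766 — 8 statements merged into one kernel-verified Lean document; each statement's English description precedes it below -/
import Mathlib

section
/- Let (A,R) be a Rota–Baxter algebra of weight 0. Define a ≺ b := aR(b) and a ≻ b := R(a)b. Then the three shuffle (dendriform) relations hold for all a,b,c ∈ A: (a ≺ b) ≺ c = a ≺ (b ≺ c + b ≻ c); a ≻ (b ≺ c) = (a ≻ b) ≺ c; a ≻ (b ≻ c) = (a ≺ b + a ≻ b) ≻ c. -/
theorem weight_zero_dendriform {k A : Type*} [Field k] [CharZero k]
    [NonUnitalRing A] [Module k A] [SMulCommClass k A A] [IsScalarTower k A A]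
    (R : A →ₗ[k] A)
    (hR : ∀ x y : A, R x * R y = R (R x * y + x * R y)) :
    (∀ a b c : A, (a * R b) * R c = a * R (b * R c + R b * c)) ∧
    (∀ a b c : A, R a * (b * R c) = (R a * b) * R c) ∧
    (∀ a b c : A, R a * (R b * c) = R (a * R b + R a * b) * c) := by
  refine ⟨fun a b c => ?_, fun a b c => mul_assoc _ _ _ |>.symm, fun a b c => ?_⟩
  · rw [mul_assoc, hR, add_comm]
  · rw [← mul_assoc, hR, add_comm]
end

section
/- Let (A,R) be a Rota–Baxter algebra of weight 1. Define a ≺ b := aR(b), a ≻ b := R(a)b, and a · b := ab, and let a ∗ b := a ≺ b + a ≻ b − a·b. Then the six quasi-shuffle (tridendriform) relations hold for all a,b,c ∈ A: (a ≺ b) ≺ c = a ≺ (b ∗ c); a ≻ (b ≻ c) = (a ∗ b) ≻ c; (a ≻ b) ≺ c = a ≻ (b ≺ c); (a ≻ b)·c = a ≻ (b·c); (a ≺ b)·c = a·(b ≻ c); (a·b) ≺ c = a·(b ≺ c). -/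
theorem weight_one_tridendriform {k A : Type*} [Field k] [CharZero k]
    [NonUnitalRing A] [Module k A] [SMulCommClass k A A] [IsScalarTower k A A]
    (R : A →ₗ[k] A)
    (hR : ∀ x y : A, R x * R y = R (R x * y + x * R y - x * y)) :
    (∀ a b c : A, (a * R b) * R c = a * R (b * R c + R b * c - b * c)) ∧
    (∀ a b c : A, R a * (R b * c) = R (a * R b + R a * b - a * b) * c) ∧
    (∀ a b c : A, (R a * b) * R c = R a * (b * R c)) ∧
    (∀ a b c : A, (R a * b) * c = R a * (b * c)) ∧
    (∀ a b c : A, (a * R b) * c = a * (R b * c)) ∧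
    (∀ a b c : A, (a * b) * R c = a * (b * R c)) := by
  refine ⟨fun a b c => ?_, fun a b c => ?_, fun a b c => ?_,
    fun a b c => mul_assoc _ _ _, fun a b c => mul_assoc _ _ _,
    fun a b c => mul_assoc _ _ _⟩
  · rw [mul_assoc, hR b c, add_comm (R b * c)]
  · rw [← mul_assoc, hR a b, add_comm (R a * b)]
  · exact mul_assoc _ _ _
end

section
/- Let (A,R) be a Rota–Baxter algebra of weight 1. Define a ≺ b := aR(b) − ab and a ≻ b := R(a)b. Then (a ≺ b) ≺ c = a ≺ (b ≺ c + b ≻ c), a ≻ (b ≺ c) = (a ≻ b) ≺ c, and a ≻ (b ≻ c) = (a ≺ b + a ≻ b) ≻ c for all a,b,c ∈ A; that is, (A, ≺, ≻) is a shuffle (dendriform) algebra. -/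
theorem weight_one_dendriform {k A : Type*} [Field k] [CharZero k]
    [NonUnitalRing A] [Module k A] [SMulCommClass k A A] [IsScalarTower k A A]
    (R : A →ₗ[k] A)
    (hR : ∀ x y : A, R x * R y = R (R x * y + x * R y - x * y))
    (p s : A → A → A)
    (hp : ∀ a b, p a b = a * R b - a * b) (hs : ∀ a b, s a b = R a * b) :
    (∀ a b c : A, p (p a b) c = p a (p b c + s b c)) ∧
    (∀ a b c : A, s a (p b c) = p (s a b) c) ∧
    (∀ a b c : A, s a (s b c) = s (p a b + s a b) c) := by
  have key : ∀ x y : A, R (x * R y - x * y + R x * y) = R x * R y := by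
    intro x y
    rw [hR]
    congr 1; abel
  refine ⟨fun a b c => ?_, fun a b c => ?_, fun a b c => ?_⟩ <;>
    simp only [hp, hs, key] <;> noncomm_ring
end

section
/- Let (A,R) be a Rota–Baxter algebra of weight θ and set R̃ := θ·Id − R. Then the product x •_θ y := R(x)y + yR̃(x) (equivalently x •_θ y = [R(x),y] + θyx) satisfies the left pre-Lie identity: x •_θ (y •_θ z) − (x •_θ y) •_θ z = y •_θ (x •_θ z) − (y •_θ x) •_θ z for all x,y,z ∈ A. -/
theorem rota_baxter_pre_lie {k A : Type*} [Field k] [CharZero k]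
    [NonUnitalRing A] [Module k A] [SMulCommClass k A A] [IsScalarTower k A A]
    (θ : k) (R : A →ₗ[k] A)
    (hR : ∀ x y : A, R x * R y = R (R x * y + x * R y - θ • (x * y)))
    (b : A → A → A) (hb : ∀ x y, b x y = R x * y + y * (θ • x - R x)) :
    ∀ x y z : A,
      b x (b y z) - b (b x y) z = b y (b x z) - b (b y x) z := by
  have key : ∀ a c : A, R (R a * c) = R a * R c - R (a * R c) + θ • R (a * c) := by
    intro a c
    have h := hR a c
    simp only [map_add, map_sub, map_smul] at h
    rw [h]; abel
  intro x y z
  simp only [hb, mul_sub, sub_mul, mul_add, add_mul, map_add, map_sub, map_smul,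
    mul_smul_comm, smul_mul_assoc, key, smul_sub, smul_add, mul_assoc]
  module
end

section
/- Let (A,R) be a Rota–Baxter algebra of weight θ. Define x ▷ y := [R(x),y] and [x,y]^θ := −θ[x,y], where [a,b] = ab − ba. Then (A, [−,−]^θ, ▷) is a post-Lie algebra: x ▷ [y,z]^θ = [x ▷ y, z]^θ + [y, x ▷ z]^θ, and [x,y]^θ ▷ z = x ▷ (y ▷ z) − (x ▷ y) ▷ z − y ▷ (x ▷ z) + (y ▷ x) ▷ z, for all x,y,z ∈ A. -/
theorem rota_baxter_post_lie {k A : Type*} [Field k] [CharZero k]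
    [NonUnitalRing A] [Module k A] [SMulCommClass k A A] [IsScalarTower k A A]
    (θ : k) (R : A →ₗ[k] A)
    (hR : ∀ x y : A, R x * R y = R (R x * y + x * R y - θ • (x * y)))
    (t : A → A → A) (ht : ∀ x y, t x y = R x * y - y * R x)
    (br : A → A → A) (hbr : ∀ x y, br x y = -(θ • (x * y - y * x))) :
    (∀ x y z : A, t x (br y z) = br (t x y) z + br y (t x z)) ∧
    (∀ x y z : A,
      t (br x y) z = t x (t y z) - t (t x y) z - t y (t x z) + t (t y x) z) := by
  constructor
  · intro x y z
    simp only [ht, hbr, mul_sub, sub_mul, smul_sub, mul_smul_comm, smul_mul_assoc, mul_neg,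
      neg_mul, neg_sub, mul_assoc]
    abel
  · intro x y z
    have e : θ • (R (x * y) - R (y * x))
        = R (R x * y) + R (x * R y) - R (R y * x) - R (y * R x)
          - (R x * R y - R y * R x) := by
      rw [hR x y, hR y x]
      simp only [map_sub, map_add, map_smul, smul_sub]
      abel
    simp only [ht, hbr, map_neg, map_smul, map_sub]
    rw [e]
    simp only [sub_mul, add_mul, mul_sub, mul_add, smul_sub, neg_sub, mul_smul_comm,
      smul_mul_assoc, mul_neg, neg_mul, mul_assoc]
    abel
end

section
/- Let (A,R) be a unital Rota–Baxter algebra of weight θ, R̃ := θ·Id − R, and work in the formal power series algebra A[[λ]] with R, R̃ extended coefficientwise. Let f be the unique solution of f = 1 + λR(f·x) and h the unique solution of h = 1 + λR̃(x·h), for a fixed x ∈ A. Then f·h = 1 + λθ·f·x·h. -/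
/-!
Put `a = f x`, `b = x h` and `R̃ = θ - R`. Expanding `f h = (1 + λ R a)(1 + λ R̃ b)`, the
quadratic term is handled by the identity `R a · R̃ b = R̃ (R a · b) + R (a · R̃ b)`, a
rearrangement of the Rota–Baxter relation. Feeding the defining equations back in,
`λ R (a · R̃ b) = R (a (h - 1))` and `λ R̃ (R a · b) = R̃ ((f - 1) b)`, so everything telescopes
to `f h = 1 + λ (R + R̃)(f x h) = 1 + λ θ f x h`. Only the facts that `λ` is central
and commutes with `R` are used.
-/

open PowerSeries

section RotaBaxter

variable {k B : Type*} [CommRing k] [Ring B] [Algebra k B]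

def IsRotaBaxter (θ : k) (P : B →ₗ[k] B) : Prop :=
  ∀ a b : B, P a * P b = P (P a * b + a * P b - θ • (a * b))

/-- The operator `R̃ = θ - R`. -/
def weightCompl (θ : k) (P : B →ₗ[k] B) : B →ₗ[k] B := θ • LinearMap.id - P

@[simp]
theorem weightCompl_apply (θ : k) (P : B →ₗ[k] B) (b : B) : weightCompl θ P b = θ • b - P b :=
  rfl

variable {θ : k} {P : B →ₗ[k] B}

theorem IsRotaBaxter.mul_weightCompl (hP : IsRotaBaxter θ P) (a b : B) :
    P a * weightCompl θ P b =
      weightCompl θ P (P a * b) + P (a * weightCompl θ P b) := by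
  simp only [weightCompl_apply, mul_sub, mul_smul_comm, hP a b, map_add, map_sub, map_smul]
  abel

theorem IsRotaBaxter.atkinson (hP : IsRotaBaxter θ P) (t : B) (ht : ∀ c, Commute t c)
    (hPt : ∀ c, P (t * c) = t * P c) {x f h : B}
    (hf : f = 1 + t * P (f * x)) (hh : h = 1 + t * weightCompl θ P (x * h)) :
    f * h = 1 + θ • (t * (f * x * h)) := by
  have hQt : ∀ c, weightCompl θ P (t * c) = t * weightCompl θ P c := fun c => by
    simp only [weightCompl_apply, hPt, mul_sub, mul_smul_comm]
  have hf' : t * P (f * x) = f - 1 := eq_sub_of_add_eq' hf.symm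
  have hh' : t * weightCompl θ P (x * h) = h - 1 := eq_sub_of_add_eq' hh.symm
  have hleft : t * P (f * x * weightCompl θ P (x * h)) = P (f * x * h) - P (f * x) := by
    rw [← hPt, ← mul_assoc, (ht _).eq, mul_assoc, hh', mul_sub, mul_one, map_sub]
  have hright : t * weightCompl θ P (P (f * x) * (x * h)) =
      weightCompl θ P (f * x * h) - weightCompl θ P (x * h) := by
    rw [← hQt, ← mul_assoc, hf', sub_mul, one_mul, map_sub, mul_assoc]
  have hexpand : ∀ u v, (1 + t * u) * (1 + t * v) = 1 + t * u + t * v + t * (t * (u * v)) :=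
    fun u v => by
      simp only [add_mul, mul_add, one_mul, mul_one, mul_assoc, (ht u).symm.left_comm]
      abel
  calc f * h = (1 + t * P (f * x)) * (1 + t * weightCompl θ P (x * h)) := by rw [← hf, ← hh]
    _ = 1 + t * (P (f * x * h) + weightCompl θ P (f * x * h)) := by
        rw [hexpand, hP.mul_weightCompl, mul_add t (weightCompl θ P _), mul_add t, hright, hleft]
        simp only [mul_add, mul_sub]
        abel
    _ = 1 + θ • (t * (f * x * h)) := by rw [weightCompl_apply, add_sub_cancel, mul_smul_comm]

end RotaBaxter

section Coeffwise

variable {k A : Type*} [CommRing k] [Ring A] [Algebra k A]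

noncomputable def PowerSeries.coeffwise (T : A →ₗ[k] A) : A⟦X⟧ →ₗ[k] A⟦X⟧ where
  toFun F := mk fun n => T (coeff n F)
  map_add' F G := by ext; simp
  map_smul' c F := by ext; simp

@[simp]
theorem PowerSeries.coeff_coeffwise (T : A →ₗ[k] A) (F : A⟦X⟧) (n : ℕ) :
    coeff n (coeffwise T F) = T (coeff n F) := by
  simp [coeffwise]

theorem PowerSeries.coeffwise_X_mul (T : A →ₗ[k] A) (F : A⟦X⟧) :
    coeffwise T (X * F) = X * coeffwise T F := by
  ext (_ | n) <;> simp [coeff_succ_X_mul]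

theorem IsRotaBaxter.coeffwise {θ : k} {T : A →ₗ[k] A} (hT : IsRotaBaxter θ T) :
    IsRotaBaxter θ (coeffwise T) := by
  intro F G
  ext n
  rw [coeff_coeffwise, coeff_mul, map_sub, map_add, coeff_smul, coeff_mul, coeff_mul, coeff_mul,
    Finset.smul_sum, ← Finset.sum_add_distrib, ← Finset.sum_sub_distrib, map_sum]
  refine Finset.sum_congr rfl fun _ _ => ?_
  simp only [coeff_coeffwise]
  exact hT _ _

end Coeffwise

theorem atkinson_central_general {k A : Type*} [Field k] [Ring A] [Algebra k A]
    (θ : k) (R : A →ₗ[k] A)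
    (hR : ∀ a b : A, R a * R b = R (R a * b + a * R b - θ • (a * b)))
    (Rext Rtext : PowerSeries A → PowerSeries A)
    (hRext : ∀ (F : PowerSeries A) (n : ℕ),
      PowerSeries.coeff n (Rext F) = R (PowerSeries.coeff n F))
    (hRtext : ∀ (F : PowerSeries A) (n : ℕ),
      PowerSeries.coeff n (Rtext F) =
        θ • PowerSeries.coeff n F - R (PowerSeries.coeff n F))
    (x : A) (f h : PowerSeries A)
    (hf : f = 1 + PowerSeries.X * Rext (f * PowerSeries.C x))
    (hh : h = 1 + PowerSeries.X * Rtext (PowerSeries.C x * h)) :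
    f * h = 1 + θ • (PowerSeries.X * (f * PowerSeries.C x * h)) := by
  have hRext_eq : Rext = coeffwise R := funext fun F => ext fun n => by simp [hRext]
  have hRtext_eq : Rtext = weightCompl θ (coeffwise R) :=
    funext fun F => ext fun n => by simp [hRtext]
  rw [hRext_eq] at hf
  rw [hRtext_eq] at hh
  exact IsRotaBaxter.coeffwise hR |>.atkinson X (fun c => (commute_X c).symm)
    (coeffwise_X_mul R) hf hh

theorem atkinson_central {k A : Type*} [Field k] [CharZero k] [Ring A] [Algebra k A]
    (θ : k) (R : A →ₗ[k] A)
    (hR : ∀ a b : A, R a * R b = R (R a * b + a * R b - θ • (a * b)))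
    (Rext Rtext : PowerSeries A → PowerSeries A)
    (hRext : ∀ (F : PowerSeries A) (n : ℕ),
      PowerSeries.coeff n (Rext F) = R (PowerSeries.coeff n F))
    (hRtext : ∀ (F : PowerSeries A) (n : ℕ),
      PowerSeries.coeff n (Rtext F) =
        θ • PowerSeries.coeff n F - R (PowerSeries.coeff n F))
    (x : A) (f h : PowerSeries A)
    (hf : f = 1 + PowerSeries.X * Rext (f * PowerSeries.C x))
    (hh : h = 1 + PowerSeries.X * Rtext (PowerSeries.C x * h)) :
    f * h = 1 + θ • (PowerSeries.X * (f * PowerSeries.C x * h)) :=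
  atkinson_central_general θ R hR Rext Rtext hRext hRtext x f h hf hh
end

section
/- Let (A,R) be a unital Rota–Baxter algebra of weight θ, R̃ := θ·Id − R, x ∈ A, and let f, h ∈ A[[λ]] be the unique solutions of f = 1 + λR(f·x) and h = 1 + λR̃(x·h). Then Atkinson's factorisation holds: 1 − λθx = f⁻¹ · h⁻¹ in A[[λ]], where f⁻¹ = 1 − λR(x·h) and h⁻¹ = 1 − λR̃(f·x). -/
/-!
Write `R̃ = θ • id - R`. The Rota–Baxter identity of `R` is equivalent to the mixed identity
`R a * R̃ b = R (a * R̃ b) + R̃ (R a * b)`, which survives coefficientwise extension to `A⟦λ⟧`.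
Applied to `f - 1 = λ R(f x)` and `h - 1 = λ R̃(x h)` it gives
`(f - 1)(h - 1) = λ R(f x (h - 1)) + λ R̃((f - 1) x h) = θ λ f x h - (f - 1) - (h - 1)`,
i.e. Atkinson's identity `f (1 - θ λ x) h = 1`. Since `R + R̃ = θ • id`, the fixpoint equations
say precisely `(1 - θ λ x) h = 1 - λ R(x h)` and `f (1 - θ λ x) = 1 - λ R̃(f x)`. As `f` has
constant coefficient `1` it is a unit, so its right inverse `(1 - θ λ x) h` is also a left
inverse, and the product of the two factors collapses to `1 - θ λ x`.
-/

open PowerSeries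

namespace LinearMap

variable {k A : Type*} [CommSemiring k] [Ring A] [Algebra k A]

def rotaBaxterComplement (θ : k) (R : A →ₗ[k] A) : A →ₗ[k] A :=
  θ • LinearMap.id - R

@[simp]
theorem rotaBaxterComplement_apply (θ : k) (R : A →ₗ[k] A) (a : A) :
    R.rotaBaxterComplement θ a = θ • a - R a :=
  rfl

theorem add_rotaBaxterComplement_apply (θ : k) (R : A →ₗ[k] A) (a : A) :
    R a + R.rotaBaxterComplement θ a = θ • a :=
  add_sub_cancel (R a) (θ • a)

theorem rotaBaxter_mul_complement (θ : k) (R : A →ₗ[k] A)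
    (hR : ∀ a b : A, R a * R b = R (R a * b + a * R b - θ • (a * b))) (a b : A) :
    R a * R.rotaBaxterComplement θ b =
      R (a * R.rotaBaxterComplement θ b) + R.rotaBaxterComplement θ (R a * b) := by
  simp only [rotaBaxterComplement_apply, mul_sub, map_sub, hR, map_add, map_smul, mul_smul_comm]
  abel

end LinearMap

namespace PowerSeries

variable {A : Type*} [Ring A]

def IsCoeffwise (φ : A →+ A) (Φ : A⟦X⟧ → A⟦X⟧) : Prop :=
  ∀ F n, coeff n (Φ F) = φ (coeff n F)

namespace IsCoeffwise

variable {φ ψ : A →+ A} {Φ Ψ : A⟦X⟧ → A⟦X⟧}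

theorem map_sub (hΦ : IsCoeffwise φ Φ) (F G : A⟦X⟧) : Φ (F - G) = Φ F - Φ G := by
  ext n; simp [hΦ _ n]

theorem map_X_mul (hΦ : IsCoeffwise φ Φ) (F : A⟦X⟧) : Φ (X * F) = X * Φ F := by
  ext (_ | n) <;> simp [hΦ _ _, coeff_succ_X_mul]

theorem mul_eq (hmul : ∀ a b, φ a * ψ b = φ (a * ψ b) + ψ (φ a * b))
    (hΦ : IsCoeffwise φ Φ) (hΨ : IsCoeffwise ψ Ψ) (F G : A⟦X⟧) :
    Φ F * Ψ G = Φ (F * Ψ G) + Ψ (Φ F * G) := by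
  ext n; simp [coeff_mul, hΦ _ _, hΨ _ _, hmul, Finset.sum_add_distrib]

variable {k : Type*} [CommSemiring k] [Algebra k A] {θ : k}

theorem add_eq_smul (hadd : ∀ a, φ a + ψ a = θ • a) (hΦ : IsCoeffwise φ Φ)
    (hΨ : IsCoeffwise ψ Ψ) (F : A⟦X⟧) : Φ F + Ψ F = θ • F := by
  ext n; simp [hΦ _ n, hΨ _ n, hadd]

theorem one_sub_X_mul_C_mul_eq (hadd : ∀ a, φ a + ψ a = θ • a) (hΦ : IsCoeffwise φ Φ)
    (hΨ : IsCoeffwise ψ Ψ) {x : A} {h : A⟦X⟧} (hh : h = 1 + X * Ψ (C x * h)) :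
    1 - X * Φ (C x * h) = (1 - θ • (X * C x)) * h := calc
  1 - X * Φ (C x * h) = 1 + X * Ψ (C x * h) - θ • (X * (C x * h)) := by
    rw [eq_sub_of_add_eq' (add_eq_smul hadd hΦ hΨ _), mul_sub, mul_smul_comm]
    abel
  _ = (1 - θ • (X * C x)) * h := by rw [← hh, sub_mul, one_mul, smul_mul_assoc, mul_assoc]

theorem one_sub_X_mul_mul_C_eq (hadd : ∀ a, φ a + ψ a = θ • a) (hΦ : IsCoeffwise φ Φ)
    (hΨ : IsCoeffwise ψ Ψ) {x : A} {f : A⟦X⟧} (hf : f = 1 + X * Φ (f * C x)) :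
    1 - X * Ψ (f * C x) = f * (1 - θ • (X * C x)) := calc
  1 - X * Ψ (f * C x) = 1 + X * Φ (f * C x) - θ • (X * (f * C x)) := by
    rw [eq_sub_of_add_eq (add_eq_smul hadd hΦ hΨ _), mul_sub, mul_smul_comm]
    abel
  _ = f * (1 - θ • (X * C x)) := by
    rw [← hf, mul_sub, mul_one, mul_smul_comm, (commute_X f).left_comm]

theorem mul_one_sub_smul_X_mul_eq_one (hmul : ∀ a b, φ a * ψ b = φ (a * ψ b) + ψ (φ a * b))
    (hadd : ∀ a, φ a + ψ a = θ • a) (hΦ : IsCoeffwise φ Φ) (hΨ : IsCoeffwise ψ Ψ)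
    {x : A} {f h : A⟦X⟧} (hf : f = 1 + X * Φ (f * C x)) (hh : h = 1 + X * Ψ (C x * h)) :
    f * (1 - θ • (X * C x)) * h = 1 := by
  set a := f * C x
  set b := C x * h
  have hf' : f - 1 = X * Φ a := sub_eq_of_eq_add' hf
  have hh' : h - 1 = X * Ψ b := sub_eq_of_eq_add' hh
  have hprod : (f - 1) * (h - 1) = θ • (X * (f * C x * h)) - (f - 1) - (h - 1) := calc
    (f - 1) * (h - 1) = X * (X * (Φ a * Ψ b)) := by
      rw [hf', hh', mul_assoc, (commute_X (Φ a)).left_comm]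
    _ = X * (Φ (a * (X * Ψ b)) + Ψ (X * Φ a * b)) := by
      rw [mul_eq hmul hΦ hΨ, mul_add, ← hΦ.map_X_mul, ← hΨ.map_X_mul,
        (commute_X a).symm.left_comm, ← mul_assoc X (Φ a) b]
    _ = X * (Φ (f * C x * h) - Φ a + (Ψ (f * C x * h) - Ψ b)) := by
      rw [← hf', ← hh', mul_sub, sub_mul, hΦ.map_sub, hΨ.map_sub, mul_one, one_mul, mul_assoc f]
    _ = θ • (X * (f * C x * h)) - (f - 1) - (h - 1) := by
      rw [sub_add_sub_comm, add_eq_smul hadd hΦ hΨ, hf', hh', mul_sub, mul_add, mul_smul_comm,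
        sub_add_eq_sub_sub]
  have hX : f * (X * C x) * h = X * (f * C x * h) := by
    rw [← mul_assoc f, (commute_X f).eq, mul_assoc X, mul_assoc X]
  calc f * (1 - θ • (X * C x)) * h
      = (f - 1) * (h - 1) - θ • (X * (f * C x * h)) + (f - 1) + (h - 1) + 1 := by
        rw [mul_sub, mul_one, sub_mul, mul_smul_comm, smul_mul_assoc, hX, mul_sub, sub_mul,
          sub_mul, mul_one, one_mul, one_mul]
        abel
    _ = 1 := by
      rw [hprod]
      abel

end IsCoeffwise

end PowerSeries

theorem atkinson_factorisation_general {k A : Type*} [Field k] [Ring A] [Algebra k A]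
    (θ : k) (R : A →ₗ[k] A)
    (hR : ∀ a b : A, R a * R b = R (R a * b + a * R b - θ • (a * b)))
    (Rext Rtext : PowerSeries A → PowerSeries A)
    (hRext : ∀ (F : PowerSeries A) (n : ℕ),
      PowerSeries.coeff n (Rext F) = R (PowerSeries.coeff n F))
    (hRtext : ∀ (F : PowerSeries A) (n : ℕ),
      PowerSeries.coeff n (Rtext F) =
        θ • PowerSeries.coeff n F - R (PowerSeries.coeff n F))
    (x : A) (f h : PowerSeries A)
    (hf : f = 1 + PowerSeries.X * Rext (f * PowerSeries.C x))
    (hh : h = 1 + PowerSeries.X * Rtext (PowerSeries.C x * h)) :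
    (1 : PowerSeries A) - θ • (PowerSeries.X * PowerSeries.C x) =
      (1 - PowerSeries.X * Rext (PowerSeries.C x * h)) *
        (1 - PowerSeries.X * Rtext (f * PowerSeries.C x)) := by
  have hΦ : IsCoeffwise R.toAddMonoidHom Rext := hRext
  have hΨ : IsCoeffwise (R.rotaBaxterComplement θ).toAddMonoidHom Rtext := hRtext
  have hadd := R.add_rotaBaxterComplement_apply θ
  have key := hΦ.mul_one_sub_smul_X_mul_eq_one (R.rotaBaxter_mul_complement θ hR) hadd hΨ hf hh
  have hleft : (1 - θ • (X * C x)) * h * f = 1 := by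
    obtain ⟨u, rfl⟩ : IsUnit f := isUnit_iff_constantCoeff.2 (by rw [hf]; simp)
    rw [← Units.inv_eq_of_mul_eq_one_right (a := (1 - θ • (X * C x)) * h) (by rwa [← mul_assoc]),
      Units.inv_mul]
  rw [hΦ.one_sub_X_mul_C_mul_eq hadd hΨ hh, hΦ.one_sub_X_mul_mul_C_eq hadd hΨ hf, ← mul_assoc,
    hleft, one_mul]

theorem atkinson_factorisation {k A : Type*} [Field k] [CharZero k] [Ring A] [Algebra k A]
    (θ : k) (R : A →ₗ[k] A)
    (hR : ∀ a b : A, R a * R b = R (R a * b + a * R b - θ • (a * b)))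
    (Rext Rtext : PowerSeries A → PowerSeries A)
    (hRext : ∀ (F : PowerSeries A) (n : ℕ),
      PowerSeries.coeff n (Rext F) = R (PowerSeries.coeff n F))
    (hRtext : ∀ (F : PowerSeries A) (n : ℕ),
      PowerSeries.coeff n (Rtext F) =
        θ • PowerSeries.coeff n F - R (PowerSeries.coeff n F))
    (x : A) (f h : PowerSeries A)
    (hf : f = 1 + PowerSeries.X * Rext (f * PowerSeries.C x))
    (hh : h = 1 + PowerSeries.X * Rtext (PowerSeries.C x * h)) :
    (1 : PowerSeries A) - θ • (PowerSeries.X * PowerSeries.C x) =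
      (1 - PowerSeries.X * Rext (PowerSeries.C x * h)) *
        (1 - PowerSeries.X * Rtext (f * PowerSeries.C x)) :=
  atkinson_factorisation_general θ R hR Rext Rtext hRext hRtext x f h hf hh
end

section
/- For all integers n ≥ 1 and all 0 ≤ l ≤ n−1, the alternating sum Σ_{j=0}^{n−l−1} binom(n−l−1, j)·(−1)^{l+j}/(l+j+1) equals (−1)^l·(1/n)·binom(n−1, l)⁻¹. Equivalently, Σ_{T ⊆ S ⊆ [n−1]} (−1)^{|S|}/(|S|+1) = (−1)^{|T|}·(1/n)·binom(n−1,|T|)⁻¹ for any fixed subset T ⊆ [n−1] with |T| = l, summing over all S containing T. -/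
/-!
With `m = n - l - 1`, the sum is `(-1)^l ∫₀¹ x^l (1-x)^m dx` expanded termwise, so it equals the
Beta value `(-1)^l · l! m! / (l+m+1)!`. Instead of integrating, we check this through the Pascal
recursion `B(m+1, l) = B(m, l) - B(m, l+1)`, which both sides satisfy.
-/

open Finset Nat

def betaSum (K : Type*) [DivisionRing K] (m l : ℕ) : K :=
  ∑ j ∈ range (m + 1), (m.choose j : K) * ((-1) ^ j / (l + j + 1))

section

variable {K : Type*} [Field K]

theorem betaSum_zero (l : ℕ) : betaSum K 0 l = 1 / (l + 1) := by
  simp [betaSum]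

theorem betaSum_succ (m l : ℕ) : betaSum K (m + 1) l = betaSum K m l - betaSum K m (l + 1) := by
  rw [betaSum, sum_choose_succ_mul (fun j _ => ((-1 : K) ^ j / (l + j + 1))), betaSum, betaSum,
    sub_eq_add_neg, ← sum_neg_distrib]
  congr 1
  refine sum_congr rfl fun j _ => ?_
  push_cast
  ring

variable [CharZero K]

theorem betaSum_eq_factorial (m l : ℕ) :
    betaSum K m l = (l ! * m ! : K) / (l + m + 1)! := by
  induction m generalizing l with
  | zero =>
    have : (l ! : K) ≠ 0 := by exact_mod_cast factorial_ne_zero l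
    rw [betaSum_zero, add_zero, factorial_succ, factorial_zero]
    push_cast
    field_simp
  | succ m ih =>
    rw [betaSum_succ, ih, ih, show l + 1 + m + 1 = l + m + 1 + 1 by ring,
      show l + (m + 1) + 1 = l + m + 1 + 1 by ring, factorial_succ (l + m + 1),
      factorial_succ l, factorial_succ m]
    have : ((l + m + 1)! : K) ≠ 0 := by exact_mod_cast factorial_ne_zero _
    have : ((l + m + 1 + 1 : ℕ) : K) ≠ 0 := cast_ne_zero.mpr (succ_ne_zero _)
    push_cast at *
    field_simp
    ring

theorem betaSum_eq_inv_choose (m l : ℕ) :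
    betaSum K m l = (((l + m + 1 : ℕ) : K) * ((l + m).choose l : K))⁻¹ := by
  have h := add_choose_mul_factorial_mul_factorial m l
  rw [add_comm m l] at h
  have : (l ! * m ! : K) ≠ 0 := by
    exact_mod_cast mul_ne_zero (factorial_ne_zero l) (factorial_ne_zero m)
  rw [betaSum_eq_factorial, factorial_succ, ← h]
  push_cast
  rw [show ((l + m + 1) * ((l + m).choose l * m ! * l !) : K)
      = l ! * m ! * ((l + m + 1) * (l + m).choose l) by ring, div_mul_cancel_left₀ this]

end

theorem bch_coefficient_identity (n l : ℕ) (hn : 1 ≤ n) (hl : l ≤ n - 1) :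
    ∑ j ∈ Finset.range (n - l), ((n - l - 1).choose j : ℚ) * (-1) ^ (l + j) / (l + j + 1)
      = (-1) ^ l * (1 / n) * (((n - 1).choose l : ℚ))⁻¹ := by
  obtain ⟨m, rfl⟩ : ∃ m, n = l + m + 1 := ⟨n - l - 1, by omega⟩
  rw [show l + m + 1 - l = m + 1 by omega, show m + 1 - 1 = m by omega,
    show l + m + 1 - 1 = l + m by omega]
  have hsum : ∑ j ∈ range (m + 1), (m.choose j : ℚ) * (-1) ^ (l + j) / (l + j + 1)
      = (-1) ^ l * betaSum ℚ m l := by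
    rw [betaSum, mul_sum]
    refine sum_congr rfl fun j _ => ?_
    rw [pow_add]
    ring
  rw [hsum, betaSum_eq_inv_choose, mul_inv, one_div]
  ring
end
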